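/- Let X be a set, M a commutative family of transformations of X, and ≽ an M-coherent preorder on X. Let w, z ∈ X be such that neither w ≽ z nor z ≽ w. Then there exists an acyclic, M-coherent binary relation ≽' on X that is an extension of ≽ and renders w and z comparable (i.e., w ≽' z or z ≽' w). -/
import Mathlib


/-- The strict part of a binary relation: `x ≻ y` iff `x ≽ y` and not `y ≽ x`. -/
def StrictRel {X : Type*} (R : X → X → Prop) (x y : X) : Prop := R x y ∧ ¬ R y x

/-- `R` is `M`-coherent: every `ω ∈ M` preserves the weak and the strict relation. -/
def Coherent {X : Type*} (M : Set (X → X)) (R : X → X → Prop) : Prop :=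
  ∀ ω ∈ M, ∀ x y : X, (R x y → R (ω x) (ω y)) ∧ (StrictRel R x y → StrictRel R (ω x) (ω y))

/-- `R` is strongly `M`-coherent: coherent, and the converse implications also hold. -/
def StronglyCoherent {X : Type*} (M : Set (X → X)) (R : X → X → Prop) : Prop :=
  Coherent M R ∧
    ∀ ω ∈ M, ∀ x y : X, (R (ω x) (ω y) → R x y) ∧ (StrictRel R (ω x) (ω y) → StrictRel R x y)

/-- `R` is acyclic: there is no `k ≥ 2` and distinct `x₁, …, x_k` with
`x₁ ≽ x₂ ≽ … ≽ x_k` and `x_k ≻ x₁`.  (Indices here run from `0` to `k-1`.) -/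
def Acyclic {X : Type*} (R : X → X → Prop) : Prop :=
  ¬ ∃ (k : ℕ) (x : ℕ → X), 2 ≤ k ∧
      (∀ i j, i < k → j < k → x i = x j → i = j) ∧
      (∀ i, i + 1 < k → R (x i) (x (i + 1))) ∧
      StrictRel R (x (k - 1)) (x 0)

/-- `R'` is an extension of `R`. -/
def IsExtension {X : Type*} (R R' : X → X → Prop) : Prop :=
  (∀ x y, R x y → R' x y) ∧ (∀ x y, StrictRel R x y → StrictRel R' x y)

/-- A commutative family of transformations: nonempty, pairwise commuting, containing
the identity, and closed under composition. -/
def CommFamily {X : Type*} (M : Set (X → X)) : Prop :=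
  M.Nonempty ∧ (∀ f ∈ M, ∀ g ∈ M, f ∘ g = g ∘ f) ∧ (id ∈ M) ∧ (∀ f ∈ M, ∀ g ∈ M, f ∘ g ∈ M)


namespace L3

lemma mod_succ (i q : ℕ) (hq : 0 < q) :
    (i + 1) % q = if i % q + 1 = q then 0 else i % q + 1 := by
  rcases Nat.lt_or_ge 1 q with h1 | h1
  · rw [Nat.add_mod i 1 q, Nat.mod_eq_of_lt h1]
    by_cases h : i % q + 1 = q
    · simp [h]
    · have hlt : i % q + 1 < q := by
        have := Nat.mod_lt i hq; omega
      simp [h, Nat.mod_eq_of_lt hlt]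
  · have hq1 : q = 1 := by omega
    subst hq1; simp [Nat.mod_one]

def tok (e : ℕ → ℕ) : ℕ → ℕ
  | 0 => 0
  | r + 1 => tok e r + e r

lemma tok_mul (e : ℕ → ℕ) (p : ℕ) (he : ∀ i, e (i + p) = e i) :
    ∀ L, tok e (L * p) = L * tok e p := by
  have shift : ∀ r, tok e (p + r) = tok e p + tok e r := by
    intro r
    induction r with
    | zero => rfl
    | succ n ih =>
      have h : p + (n + 1) = (p + n) + 1 := by omega
      rw [h]
      show tok e (p + n) + e (p + n) = _
      rw [ih, Nat.add_comm p n, he n]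
      show _ = tok e p + (tok e n + e n)
      omega
  intro L
  induction L with
  | zero => simp [tok]
  | succ n ih =>
    have h : (n + 1) * p = p + n * p := by ring
    rw [h, shift, ih]
    ring

lemma per_apply {α : Type*} (σ' : ℕ → α) (q : ℕ) (hper : ∀ i, σ' (i + q) = σ' i) :
    ∀ k i, σ' (i + k * q) = σ' i := by
  intro k
  induction k with
  | zero => intro i; simp
  | succ n ih =>
    intro i
    have h : i + (n + 1) * q = (i + n * q) + q := by ring
    rw [h, hper, ih]

lemma acyclic_of_trans {X : Type*} {R' : X → X → Prop} (ht : Transitive R') : Acyclic R' := by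
  rintro ⟨k, x, hk, hinj, hchain, hstrict⟩
  have key : ∀ j, 1 ≤ j → j < k → R' (x 0) (x j) := by
    intro j
    induction j with
    | zero => intro h _; exact absurd h (by omega)
    | succ n ih =>
      intro _ hlt
      rcases Nat.eq_zero_or_pos n with hn | hn
      · subst hn; exact hchain 0 hlt
      · exact ht (ih hn (by omega)) (hchain n hlt)
  exact hstrict.2 (key (k - 1) (by omega) (by omega))


def Cyc {X : Type*} (M : Set (X → X)) (R : X → X → Prop) (a b : X) : Prop :=
  ∃ σ : ℕ → X → X, ∃ q : ℕ, 0 < q ∧ (∀ i, σ i ∈ M) ∧ (∀ i, σ (i + q) = σ i) ∧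
    ∀ i, R (σ i a) (σ (i + 1) b)

def Jmp {X : Type*} (M : Set (X → X)) (R : X → X → Prop) (w z : X) (x y : X) : Prop :=
  ∃ m : ℕ, ∃ f : ℕ → X → X, (∀ i, f i ∈ M) ∧ R x (f 0 w) ∧
    (∀ i < m, R (f i z) (f (i + 1) w)) ∧ R (f m z) y

theorem caseA {X : Type*} (M : Set (X → X)) (R : X → X → Prop)
    (hM : CommFamily M) (hrefl : Reflexive R) (htrans : Transitive R)
    (hcoh : Coherent M R) (w z : X) (hnc : ¬ Cyc M R z w) :
    ∃ R' : X → X → Prop, Acyclic R' ∧ Coherent M R' ∧ IsExtension R R' ∧ R' w z := by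
  obtain ⟨-, hcomm, hid, hclose⟩ := hM
  set J := Jmp M R w z with hJ
  have LJR : ∀ {x y u}, J x y → R y u → J x u := by
    rintro x y u ⟨m, f, hf, hh, hl, ht⟩ h
    exact ⟨m, f, hf, hh, hl, htrans ht h⟩
  have LRJ : ∀ {x y u}, R x y → J y u → J x u := by
    rintro x y u h ⟨m, f, hf, hh, hl, ht⟩
    exact ⟨m, f, hf, htrans h hh, hl, ht⟩
  have LJJ : ∀ {x y u}, J x y → J y u → J x u := by
    rintro x y u ⟨m, f, hf, hh, hl, ht⟩ ⟨k, g, hg, hh2, hl2, ht2⟩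
    refine ⟨m + 1 + k, fun i => if i ≤ m then f i else g (i - (m + 1)), ?_, ?_, ?_, ?_⟩
    · intro i
      by_cases h : i ≤ m
      · simpa [h] using hf i
      · simpa [h] using hg (i - (m + 1))
    · simpa using hh
    · intro i hi
      rcases lt_trichotomy i m with h | h | h
      · have h1 : i ≤ m := le_of_lt h
        have h2 : i + 1 ≤ m := h
        simp only [if_pos h1, if_pos h2]
        exact hl i h
      · subst h
        have h1 : ¬ (i + 1 ≤ i) := by omega
        simp only [if_pos (le_refl i), if_neg h1]
        have h2 : i + 1 - (i + 1) = 0 := by omega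
        rw [h2]
        exact htrans ht hh2
      · have h1 : ¬ (i ≤ m) := by omega
        have h2 : ¬ (i + 1 ≤ m) := by omega
        simp only [if_neg h1, if_neg h2]
        have e1 : i + 1 - (m + 1) = (i - (m + 1)) + 1 := by omega
        rw [e1]
        exact hl2 _ (by omega)
    · have h1 : ¬ (m + 1 + k ≤ m) := by omega
      simp only [if_neg h1]
      have h2 : m + 1 + k - (m + 1) = k := by omega
      rw [h2]
      exact ht2
  have LJC : ∀ {x}, J x x → Cyc M R z w := by
    rintro x ⟨m, f, hf, hh, hl, ht⟩
    have hwrap : R (f m z) (f 0 w) := htrans ht hh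
    refine ⟨fun i => f (i % (m + 1)), m + 1, by omega, fun i => hf _, ?_, ?_⟩
    · intro i
      show f ((i + (m + 1)) % (m + 1)) = f (i % (m + 1))
      rw [Nat.add_mod_right]
    · intro i
      show R (f (i % (m + 1)) z) (f ((i + 1) % (m + 1)) w)
      have h := mod_succ i (m + 1) (by omega)
      by_cases hc : i % (m + 1) + 1 = m + 1
      · rw [h, if_pos hc]
        have h3 : i % (m + 1) = m := by omega
        rw [h3]
        exact hwrap
      · rw [h, if_neg hc]
        have hlt : i % (m + 1) < m + 1 := Nat.mod_lt _ (by omega)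
        exact hl _ (by omega)
  have LJcoh : ∀ ω ∈ M, ∀ {x y}, J x y → J (ω x) (ω y) := by
    rintro ω hω x y ⟨m, f, hf, hh, hl, ht⟩
    refine ⟨m, fun i => ω ∘ f i, fun i => hclose ω hω (f i) (hf i), ?_, ?_, ?_⟩
    · exact (hcoh ω hω _ _).1 hh
    · intro i hi; exact (hcoh ω hω _ _).1 (hl i hi)
    · exact (hcoh ω hω _ _).1 ht
  set R' : X → X → Prop := fun x y => R x y ∨ J x y with hR'
  have char : ∀ {x y}, StrictRel R' x y ↔ (StrictRel R x y ∨ J x y) := by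
    intro x y
    constructor
    · rintro ⟨h1 | h1, h2⟩
      · exact Or.inl ⟨h1, fun h => h2 (Or.inl h)⟩
      · exact Or.inr h1
    · rintro (⟨h1, h2⟩ | h1)
      · refine ⟨Or.inl h1, ?_⟩
        rintro (h | h)
        · exact h2 h
        · exact hnc (LJC (LJR h h1))
      · refine ⟨Or.inr h1, ?_⟩
        rintro (h | h)
        · exact hnc (LJC (LJR h1 h))
        · exact hnc (LJC (LJJ h1 h))
  have htrans' : Transitive R' := by
    rintro a b c (h1 | h1) (h2 | h2)
    · exact Or.inl (htrans h1 h2)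
    · exact Or.inr (LRJ h1 h2)
    · exact Or.inr (LJR h1 h2)
    · exact Or.inr (LJJ h1 h2)
  have hcoh' : Coherent M R' := by
    intro ω hω x y
    constructor
    · rintro (h | h)
      · exact Or.inl ((hcoh ω hω x y).1 h)
      · exact Or.inr (LJcoh ω hω h)
    · intro h
      rcases char.mp h with h1 | h1
      · exact char.mpr (Or.inl ((hcoh ω hω x y).2 h1))
      · exact char.mpr (Or.inr (LJcoh ω hω h1))
  refine ⟨R', acyclic_of_trans htrans', hcoh',
    ⟨fun x y h => Or.inl h, fun x y h => char.mpr (Or.inl h)⟩, ?_⟩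
  exact Or.inr ⟨0, fun _ => id, fun _ => hid, hrefl w, fun i hi => absurd hi (by omega), hrefl z⟩


theorem mega {X : Type*} (M : Set (X → X)) (R : X → X → Prop)
    (hM : CommFamily M) (htrans : Transitive R) (hcoh : Coherent M R) (w z : X)
    (hC : Cyc M R z w) (hC' : Cyc M R w z)
    (p : ℕ) (hp : 0 < p) (ρ : ℕ → X → X) (c : ℕ → Bool)
    (hρ : ∀ i, ρ i ∈ M)
    (hlink : ∀ i, i + 1 < p →
      (R (ρ i (cond (c i) z w)) (ρ (i + 1) (cond (c (i + 1)) w z)) ∨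
        ρ i (cond (c i) z w) = ρ (i + 1) (cond (c (i + 1)) w z)))
    (hstrict : StrictRel R (ρ (p - 1) (cond (c (p - 1)) z w)) (ρ 0 (cond (c 0) w z))) :
    False := by
  obtain ⟨-, hcomm, -, hclose⟩ := hM
  obtain ⟨σ, qσ, hqσ, hσM, hσper, hσlink⟩ := hC
  obtain ⟨τ, qτ, hqτ, hτM, hτper, hτlink⟩ := hC'
  set eA : ℕ → ℕ := fun r => cond (c (r % p)) 0 1 with heA
  set eB : ℕ → ℕ := fun r => cond (c (r % p)) 1 0 with heB
  set A : ℕ → ℕ := tok eA with hA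
  set B : ℕ → ℕ := tok eB with hB
  set pos : ℕ → X := fun r => σ (A r) (τ (B r) (ρ (r % p) (cond (c (r % p)) w z))) with hpos
  set mid : ℕ → X := fun r => σ (A (r + 1)) (τ (B (r + 1)) (ρ (r % p) (cond (c (r % p)) z w))) with hmid
  have hcm : ∀ f ∈ M, ∀ g ∈ M, ∀ x : X, f (g x) = g (f x) :=
    fun f hf g hg x => congrFun (hcomm f hf g hg) x
  have step1 : ∀ r, R (pos r) (mid r) := by
    intro r
    have pA : A (r + 1) = A r + eA r := rfl
    have pB : B (r + 1) = B r + eB r := rfl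
    cases hc : c (r % p)
    · -- current side z; flip z→w via σ
      have hrel := hσlink (A r)
      have h2 := (hcoh (τ (B r) ∘ ρ (r % p)) (hclose _ (hτM (B r)) _ (hρ (r % p))) _ _).1 hrel
      have e1 : (τ (B r) ∘ ρ (r % p)) (σ (A r) z) = σ (A r) (τ (B r) (ρ (r % p) z)) := by
        show τ (B r) (ρ (r % p) (σ (A r) z)) = _
        rw [hcm (ρ (r % p)) (hρ _) (σ (A r)) (hσM _) z,
           hcm (τ (B r)) (hτM _) (σ (A r)) (hσM _) (ρ (r % p) z)]
      have e2 : (τ (B r) ∘ ρ (r % p)) (σ (A r + 1) w) = σ (A r + 1) (τ (B r) (ρ (r % p) w)) := by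
        show τ (B r) (ρ (r % p) (σ (A r + 1) w)) = _
        rw [hcm (ρ (r % p)) (hρ _) (σ (A r + 1)) (hσM _) w,
           hcm (τ (B r)) (hτM _) (σ (A r + 1)) (hσM _) (ρ (r % p) w)]
      rw [e1, e2] at h2
      show R (σ (A r) (τ (B r) (ρ (r % p) (cond (c (r % p)) w z))))
          (σ (A (r + 1)) (τ (B (r + 1)) (ρ (r % p) (cond (c (r % p)) z w))))
      rw [pA, pB, heA, heB]
      simp only [hc, cond_false]
      exact h2
    · -- current side w; flip w→z via τ
      have hrel := hτlink (B r)
      have h2 := (hcoh (σ (A r) ∘ ρ (r % p)) (hclose _ (hσM (A r)) _ (hρ (r % p))) _ _).1 hrel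
      have e1 : (σ (A r) ∘ ρ (r % p)) (τ (B r) w) = σ (A r) (τ (B r) (ρ (r % p) w)) := by
        show σ (A r) (ρ (r % p) (τ (B r) w)) = _
        rw [hcm (ρ (r % p)) (hρ _) (τ (B r)) (hτM _) w]
      have e2 : (σ (A r) ∘ ρ (r % p)) (τ (B r + 1) z) = σ (A r) (τ (B r + 1) (ρ (r % p) z)) := by
        show σ (A r) (ρ (r % p) (τ (B r + 1) z)) = _
        rw [hcm (ρ (r % p)) (hρ _) (τ (B r + 1)) (hτM _) z]
      rw [e1, e2] at h2
      show R (σ (A r) (τ (B r) (ρ (r % p) (cond (c (r % p)) w z))))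
          (σ (A (r + 1)) (τ (B (r + 1)) (ρ (r % p) (cond (c (r % p)) z w))))
      rw [pA, pB, heA, heB]
      simp only [hc, cond_true]
      exact h2
  have hlink' : ∀ i, i < p →
      (R (ρ i (cond (c i) z w)) (ρ ((i + 1) % p) (cond (c ((i + 1) % p)) w z)) ∨
        ρ i (cond (c i) z w) = ρ ((i + 1) % p) (cond (c ((i + 1) % p)) w z)) := by
    intro i hi
    by_cases h : i + 1 < p
    · rw [Nat.mod_eq_of_lt h]; exact hlink i h
    · have h2 : (i + 1) % p = 0 := by
        have h3 : i + 1 = p := by omega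
        rw [h3, Nat.mod_self]
      have h1 : i = p - 1 := by omega
      rw [h2, h1]
      exact Or.inl hstrict.1
  have step2 : ∀ r, R (mid r) (pos (r + 1)) ∨ mid r = pos (r + 1) := by
    intro r
    have hi : r % p < p := Nat.mod_lt _ hp
    have hmods : (r + 1) % p = (r % p + 1) % p := by
      rw [Nat.add_mod r 1 p]
      conv_rhs => rw [Nat.add_mod (r % p) 1 p]
      rw [Nat.mod_mod_of_dvd r dvd_rfl]
    have hgM : (σ (A (r + 1)) ∘ τ (B (r + 1))) ∈ M := hclose _ (hσM _) _ (hτM _)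
    rcases hlink' (r % p) hi with h | h
    · left
      have h2 := (hcoh _ hgM _ _).1 h
      show R (σ (A (r + 1)) (τ (B (r + 1)) (ρ (r % p) (cond (c (r % p)) z w))))
          (σ (A (r + 1)) (τ (B (r + 1)) (ρ ((r + 1) % p) (cond (c ((r + 1) % p)) w z))))
      rw [hmods]
      exact h2
    · right
      show (σ (A (r + 1)) (τ (B (r + 1)) (ρ (r % p) (cond (c (r % p)) z w))))
          = (σ (A (r + 1)) (τ (B (r + 1)) (ρ ((r + 1) % p) (cond (c ((r + 1) % p)) w z))))
      rw [hmods]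
      exact congrArg (σ (A (r + 1)) ∘ τ (B (r + 1))) h
  have chain : ∀ r, R (pos 0) (mid r) := by
    intro r
    induction r with
    | zero => exact step1 0
    | succ n ih =>
      have h3 : R (pos 0) (pos (n + 1)) := by
        rcases step2 n with h | h
        · exact htrans ih h
        · rw [← h]; exact ih
      exact htrans h3 (step1 (n + 1))
  -- counting
  have heAper : ∀ i, eA (i + p) = eA i := by
    intro i; show cond (c ((i + p) % p)) 0 1 = cond (c (i % p)) 0 1
    rw [Nat.add_mod_right]
  have heBper : ∀ i, eB (i + p) = eB i := by
    intro i; show cond (c ((i + p) % p)) 1 0 = cond (c (i % p)) 1 0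
    rw [Nat.add_mod_right]
  set L := qσ * qτ with hL
  set T := L * p with hT
  have hLpos : 0 < L := Nat.mul_pos hqσ hqτ
  have hTpos : 0 < T := Nat.mul_pos hLpos hp
  have hAT : σ (A T) = σ 0 := by
    have h1 : A T = 0 + (qτ * tok eA p) * qσ := by
      show tok eA (L * p) = _
      rw [tok_mul eA p heAper L, hL]
      ring
    rw [h1]
    exact per_apply σ qσ hσper _ 0
  have hBT : τ (B T) = τ 0 := by
    have h1 : B T = 0 + (qσ * tok eB p) * qτ := by
      show tok eB (L * p) = _
      rw [tok_mul eB p heBper L, hL]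
      ring
    rw [h1]
    exact per_apply τ qτ hτper _ 0
  have hTm : T - 1 + 1 = T := by omega
  have hTmod : (T - 1) % p = p - 1 := by
    obtain ⟨L', hL'⟩ : ∃ L', L = L' + 1 := ⟨L - 1, by omega⟩
    have h1 : T - 1 = p * L' + (p - 1) := by
      have h0 : T = p * L' + p := by rw [hT, hL']; ring
      omega
    rw [h1, Nat.mul_add_mod]
    exact Nat.mod_eq_of_lt (by omega)
  have hfin := chain (T - 1)
  have hmidT : mid (T - 1) = σ 0 (τ 0 (ρ (p - 1) (cond (c (p - 1)) z w))) := by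
    show σ (A (T - 1 + 1)) (τ (B (T - 1 + 1)) (ρ ((T - 1) % p) (cond (c ((T - 1) % p)) z w))) = _
    rw [hTm, hTmod, hAT, hBT]
  have hpos0 : pos 0 = σ 0 (τ 0 (ρ 0 (cond (c 0) w z))) := by
    show σ (A 0) (τ (B 0) (ρ (0 % p) (cond (c (0 % p)) w z))) = _
    rw [Nat.zero_mod]
    rfl
  have hν : (σ 0 ∘ τ 0) ∈ M := hclose _ (hσM 0) _ (hτM 0)
  have hstr2 := (hcoh _ hν _ _).2 hstrict
  rw [hmidT, hpos0] at hfin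
  exact hstr2.2 hfin

theorem caseC {X : Type*} (M : Set (X → X)) (R : X → X → Prop)
    (hM : CommFamily M) (hrefl : Reflexive R) (htrans : Transitive R)
    (hcoh : Coherent M R) (w z : X)
    (hC : Cyc M R z w) (hC' : Cyc M R w z) :
    ∃ R' : X → X → Prop, Acyclic R' ∧ Coherent M R' ∧ IsExtension R R' ∧ R' w z := by
  obtain ⟨hne, hcomm, hid, hclose⟩ := hM
  set Est : X → X → Prop :=
    fun x y => ∃ g, g ∈ M ∧ ((x = g w ∧ y = g z) ∨ (x = g z ∧ y = g w)) with hEst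
  set R' : X → X → Prop := fun x y => R x y ∨ Est x y with hR'
  have noStr : ∀ g ∈ M, ∀ b : Bool, ¬ StrictRel R (g (cond b z w)) (g (cond b w z)) := by
    intro g hg b hstr
    exact mega M R ⟨hne, hcomm, hid, hclose⟩ htrans hcoh w z hC hC' 1 one_pos
      (fun _ => g) (fun _ => b) (fun _ => hg) (fun i hi => absurd hi (by omega)) hstr
  have EstSymm : ∀ {x y}, Est x y → Est y x := by
    rintro x y ⟨g, hg, ⟨h1, h2⟩ | ⟨h1, h2⟩⟩
    · exact ⟨g, hg, Or.inr ⟨h2, h1⟩⟩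
    · exact ⟨g, hg, Or.inl ⟨h2, h1⟩⟩
  have S1 : ∀ {x y}, StrictRel R' x y → StrictRel R x y := by
    rintro x y ⟨h1 | h1, h2⟩
    · exact ⟨h1, fun h => h2 (Or.inl h)⟩
    · exact absurd (Or.inr (EstSymm h1)) h2
  have noEstStrict : ∀ {x y}, StrictRel R x y → ¬ Est y x := by
    rintro x y hs ⟨g, hg, ⟨h1, h2⟩ | ⟨h1, h2⟩⟩
    · rw [h2, h1] at hs
      exact noStr g hg true (by simpa using hs)
    · rw [h2, h1] at hs
      exact noStr g hg false (by simpa using hs)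
  have EstCoh : ∀ ω ∈ M, ∀ {x y}, Est x y → Est (ω x) (ω y) := by
    rintro ω hω x y ⟨g, hg, ⟨h1, h2⟩ | ⟨h1, h2⟩⟩
    · exact ⟨ω ∘ g, hclose ω hω g hg, Or.inl ⟨by rw [h1]; rfl, by rw [h2]; rfl⟩⟩
    · exact ⟨ω ∘ g, hclose ω hω g hg, Or.inr ⟨by rw [h1]; rfl, by rw [h2]; rfl⟩⟩
  have StrExt : ∀ {x y}, StrictRel R x y → StrictRel R' x y := by
    intro x y hs
    refine ⟨Or.inl hs.1, ?_⟩
    rintro (h | h)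
    · exact hs.2 h
    · exact noEstStrict hs h
  have hcoh' : Coherent M R' := by
    intro ω hω x y
    refine ⟨?_, ?_⟩
    · rintro (h | h)
      · exact Or.inl ((hcoh ω hω x y).1 h)
      · exact Or.inr (EstCoh ω hω h)
    · intro hs
      exact StrExt ((hcoh ω hω x y).2 (S1 hs))
  have hacyc : Acyclic R' := by
    rintro ⟨k, x, hk, hinj, hchain, hstrict⟩
    have hstrictR : StrictRel R (x (k - 1)) (x 0) := by
      rcases hstrict.1 with h | h
      · exact ⟨h, fun hh => hstrict.2 (Or.inl hh)⟩
      · exact absurd (Or.inr (EstSymm h)) hstrict.2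
    have key : ∀ j, j < k →
        ((R (x 0) (x j) ∨ x 0 = x j) ∨
          ∃ q, ∃ ρ : ℕ → X → X, ∃ c : ℕ → Bool, 0 < q ∧ (∀ i, ρ i ∈ M) ∧
            (R (x 0) (ρ 0 (cond (c 0) w z)) ∨ x 0 = ρ 0 (cond (c 0) w z)) ∧
            (∀ i, i + 1 < q →
              (R (ρ i (cond (c i) z w)) (ρ (i + 1) (cond (c (i + 1)) w z)) ∨
                ρ i (cond (c i) z w) = ρ (i + 1) (cond (c (i + 1)) w z))) ∧
            (R (ρ (q - 1) (cond (c (q - 1)) z w)) (x j) ∨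
              ρ (q - 1) (cond (c (q - 1)) z w) = x j)) := by
      intro j
      induction j with
      | zero => intro _; exact Or.inl (Or.inr rfl)
      | succ n ih =>
        intro hlt
        have hn : n < k := by omega
        have hstep : R' (x n) (x (n + 1)) := hchain n hlt
        rcases ih hn with hP | ⟨q, ρ, c, hq, hmem, hhead, hlinks, htail⟩
        · rcases hstep with hR | ⟨g, hg, hgc⟩
          · left
            left
            rcases hP with h | h
            · exact htrans h hR
            · rw [h]; exact hR
          · right
            rcases hgc with ⟨h1, h2⟩ | ⟨h1, h2⟩
            · refine ⟨1, fun _ => g, fun _ => true, one_pos, fun _ => hg, ?_, ?_, ?_⟩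
              · show R (x 0) (g (cond true w z)) ∨ x 0 = g (cond true w z)
                simp only [cond_true]
                rw [← h1]
                exact hP
              · intro i hi; omega
              · show R (g (cond true z w)) (x (n + 1)) ∨ g (cond true z w) = x (n + 1)
                simp only [cond_true]
                exact Or.inr h2.symm
            · refine ⟨1, fun _ => g, fun _ => false, one_pos, fun _ => hg, ?_, ?_, ?_⟩
              · show R (x 0) (g (cond false w z)) ∨ x 0 = g (cond false w z)
                simp only [cond_false]
                rw [← h1]
                exact hP
              · intro i hi; omega
              · show R (g (cond false z w)) (x (n + 1)) ∨ g (cond false z w) = x (n + 1)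
                simp only [cond_false]
                exact Or.inr h2.symm
        · rcases hstep with hR | ⟨g, hg, hgc⟩
          · right
            refine ⟨q, ρ, c, hq, hmem, hhead, hlinks, ?_⟩
            left
            rcases htail with h | h
            · exact htrans h hR
            · rw [h]; exact hR
          · right
            rcases hgc with ⟨h1, h2⟩ | ⟨h1, h2⟩
            · refine ⟨q + 1, fun i => if i < q then ρ i else g,
                fun i => if i < q then c i else true, by omega, ?_, ?_, ?_, ?_⟩
              · intro i
                by_cases h : i < q
                · simpa [h] using hmem i
                · simpa [h] using hg
              · simp only [if_pos hq]
                exact hhead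
              · intro i hi
                by_cases hiq : i + 1 < q
                · have hi' : i < q := by omega
                  simp only [if_pos hi', if_pos hiq]
                  exact hlinks i hiq
                · have hi' : i < q := by omega
                  have hnq : ¬ (i + 1 < q) := hiq
                  simp only [if_pos hi', if_neg hnq, cond_true]
                  have hieq : i = q - 1 := by omega
                  rw [hieq, ← h1]
                  exact htail
              · have hnq : ¬ (q < q) := lt_irrefl q
                simp only [Nat.add_sub_cancel, if_neg hnq, cond_true]
                exact Or.inr h2.symm
            · refine ⟨q + 1, fun i => if i < q then ρ i else g,
                fun i => if i < q then c i else false, by omega, ?_, ?_, ?_, ?_⟩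
              · intro i
                by_cases h : i < q
                · simpa [h] using hmem i
                · simpa [h] using hg
              · simp only [if_pos hq]
                exact hhead
              · intro i hi
                by_cases hiq : i + 1 < q
                · have hi' : i < q := by omega
                  simp only [if_pos hi', if_pos hiq]
                  exact hlinks i hiq
                · have hi' : i < q := by omega
                  have hnq : ¬ (i + 1 < q) := hiq
                  simp only [if_pos hi', if_neg hnq, cond_false]
                  have hieq : i = q - 1 := by omega
                  rw [hieq, ← h1]
                  exact htail
              · have hnq : ¬ (q < q) := lt_irrefl q
                simp only [Nat.add_sub_cancel, if_neg hnq, cond_false]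
                exact Or.inr h2.symm
    rcases key (k - 1) (by omega) with hP | ⟨q, ρ, c, hq, hmem, hhead, hlinks, htail⟩
    · rcases hP with h | h
      · exact hstrictR.2 h
      · apply hstrictR.2
        rw [← h]
        exact hrefl (x 0)
    · have hstr : StrictRel R (ρ (q - 1) (cond (c (q - 1)) z w)) (ρ 0 (cond (c 0) w z)) := by
        constructor
        · have h1 : R (ρ (q - 1) (cond (c (q - 1)) z w)) (x 0) := by
            rcases htail with h | h
            · exact htrans h hstrictR.1
            · rw [h]; exact hstrictR.1
          rcases hhead with h | h
          · exact htrans h1 h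
          · rw [← h]; exact h1
        · intro hcon
          apply hstrictR.2
          have h1 : R (x 0) (ρ (q - 1) (cond (c (q - 1)) z w)) := by
            rcases hhead with h | h
            · exact htrans h hcon
            · rw [h]; exact hcon
          rcases htail with h | h
          · exact htrans h1 h
          · rw [← h]; exact h1
      exact mega M R ⟨hne, hcomm, hid, hclose⟩ htrans hcoh w z hC hC' q hq ρ c hmem hlinks hstr
  refine ⟨R', hacyc, hcoh',
    ⟨fun x y h => Or.inl h, fun x y h => StrExt h⟩, Or.inr ⟨id, hid, Or.inl ⟨rfl, rfl⟩⟩⟩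

end L3

/-- **Lemma 3.** Let `M` be a commutative family, `≽` an `M`-coherent preorder, and
`w, z` incomparable under `≽`.  Then there is an acyclic `M`-coherent extension of `≽`
that renders `w` and `z` comparable. -/
theorem exists_acyclic_coherent_extension_comparing {X : Type*} (M : Set (X → X))
    (R : X → X → Prop) (hM : CommFamily M) (hrefl : Reflexive R) (htrans : Transitive R)
    (hcoh : Coherent M R) (w z : X) (hwz : ¬ R w z) (hzw : ¬ R z w) :
    ∃ R' : X → X → Prop, Acyclic R' ∧ Coherent M R' ∧ IsExtension R R' ∧
      (R' w z ∨ R' z w) := by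
  by_cases h1 : L3.Cyc M R z w
  · by_cases h2 : L3.Cyc M R w z
    · obtain ⟨R', ha, hc, he, hwz'⟩ := L3.caseC M R hM hrefl htrans hcoh w z h1 h2
      exact ⟨R', ha, hc, he, Or.inl hwz'⟩
    · obtain ⟨R', ha, hc, he, hzw'⟩ := L3.caseA M R hM hrefl htrans hcoh z w h2
      exact ⟨R', ha, hc, he, Or.inr hzw'⟩
  · obtain ⟨R', ha, hc, he, hwz'⟩ := L3.caseA M R hM hrefl htrans hcoh w z h1
    exact ⟨R', ha, hc, he, Or.inl hwz'⟩
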